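/- For the Kontsevich bracket {a,b}_K = μ(⟨⟨a,b⟩⟩_K) on A = ℂ⟨u^{±1},v^{±1}⟩, the Casimir c = uvu⁻¹v⁻¹ does NOT generate a trivial flow: {c, u}_K = uvu⁻¹v⁻¹u - u²vu⁻¹v⁻¹ ≠ 0 in A. -/

import Mathlib

open scoped TensorProduct

noncomputable section

abbrev A : Type := MonoidAlgebra ℂ (FreeGroup Bool)

def u : A := MonoidAlgebra.of ℂ (FreeGroup Bool) (FreeGroup.of false)
def v : A := MonoidAlgebra.of ℂ (FreeGroup Bool) (FreeGroup.of true)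
def ui : A := MonoidAlgebra.of ℂ (FreeGroup Bool) (FreeGroup.of false)⁻¹
def vi : A := MonoidAlgebra.of ℂ (FreeGroup Bool) (FreeGroup.of true)⁻¹

/-- The structure of a Kontsevich double bracket on A: a bilinear map
A × A → A ⊗ A satisfying both Leibniz rules and the prescribed values on the
generators u, v. -/
structure KontsevichBracket (db : A →ₗ[ℂ] A →ₗ[ℂ] A ⊗[ℂ] A) : Prop where
  outer : ∀ a b c : A,
    db a (b * c) = db a b * ((1 : A) ⊗ₜ[ℂ] c) + (b ⊗ₜ[ℂ] (1 : A)) * db a c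
  inner : ∀ a b c : A,
    db (a * b) c = db a c * (b ⊗ₜ[ℂ] (1 : A)) + ((1 : A) ⊗ₜ[ℂ] a) * db b c
  huv : db u v = -((v * u) ⊗ₜ[ℂ] (1 : A))
  hvu : db v u = (u * v) ⊗ₜ[ℂ] (1 : A)
  huu : db u u = 0
  hvv : db v v = 0

def c : A := u * v * ui * vi

/-!
The inner Leibniz rule alone computes `⟨⟨-, u⟩⟩` on words in `u^{±1}, v^{±1}`: from
`⟨⟨u, u⟩⟩ = 0` and `⟨⟨v, u⟩⟩ = uv ⊗ 1` one gets `⟨⟨u⁻¹, u⟩⟩ = 0`, `⟨⟨v⁻¹, u⟩⟩ = -(u ⊗ v⁻¹)`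
and then `⟨⟨c, u⟩⟩ = c ⊗ u - u ⊗ c`, so `{c, u} = cu - uc`. The words `cu` and
`uc` are distinct elements of the free group, so they are linearly independent in `A`.
-/

section InnerLeibniz

variable {R B : Type*} [CommRing R] [Ring B] [Algebra R B]
  {db : B →ₗ[R] B →ₗ[R] B ⊗[R] B}
  (hinner : ∀ a b c : B, db (a * b) c = db a c * (b ⊗ₜ 1) + (1 ⊗ₜ a) * db b c)
include hinner

open Algebra.TensorProduct

theorem doubleBracket_one_left (c : B) : db 1 c = 0 := by
  have h := hinner 1 1 c
  rwa [one_mul, ← one_def, mul_one, one_mul, left_eq_add] at h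

theorem doubleBracket_inverse_left {a a' : B} (h : a * a' = 1) (h' : a' * a = 1) (c : B) :
    db a' c = -((1 ⊗ₜ a') * db a c * (a' ⊗ₜ 1)) := by
  have h0 := hinner a a' c
  rw [h, doubleBracket_one_left hinner, eq_comm, add_eq_zero_iff_neg_eq] at h0
  calc db a' c = (1 ⊗ₜ a') * ((1 ⊗ₜ a) * db a' c) := by
        rw [← mul_assoc, tmul_mul_tmul, one_mul, h',
          ← one_def, one_mul]
    _ = -((1 ⊗ₜ a') * db a c * (a' ⊗ₜ 1)) := by rw [← h0, mul_neg, mul_assoc]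

end InnerLeibniz

theorem u_mul_ui : u * ui = 1 := by
  rw [u, ui, ← map_mul, mul_inv_cancel, map_one]

theorem ui_mul_u : ui * u = 1 := by
  rw [u, ui, ← map_mul, inv_mul_cancel, map_one]

theorem v_mul_vi : v * vi = 1 := by
  rw [v, vi, ← map_mul, mul_inv_cancel, map_one]

theorem vi_mul_v : vi * v = 1 := by
  rw [v, vi, ← map_mul, inv_mul_cancel, map_one]

theorem c_mul_u_ne_u_mul_c : c * u ≠ u * c := by
  simp only [c, u, v, ui, vi, ← map_mul]
  exact MonoidAlgebra.of_injective.ne (by decide)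

namespace KontsevichBracket

variable {db : A →ₗ[ℂ] A →ₗ[ℂ] A ⊗[ℂ] A} (hK : KontsevichBracket db)
include hK

open Algebra.TensorProduct

theorem apply_ui_u : db ui u = 0 := by
  rw [doubleBracket_inverse_left hK.inner u_mul_ui ui_mul_u, hK.huu, mul_zero, zero_mul, neg_zero]

theorem apply_vi_u : db vi u = -(u ⊗ₜ vi) := by
  rw [doubleBracket_inverse_left hK.inner v_mul_vi vi_mul_v, hK.hvu, tmul_mul_tmul,
    tmul_mul_tmul, one_mul, mul_one, mul_one, mul_assoc, v_mul_vi, mul_one]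

theorem apply_c_u : db c u = c ⊗ₜ u - u ⊗ₜ c := by
  have h_uv : db (u * v) u = (u * v) ⊗ₜ u := by
    rw [hK.inner, hK.huu, hK.hvu, zero_mul, zero_add, tmul_mul_tmul, one_mul, mul_one]
  have h_uvui : db (u * v * ui) u = (u * v * ui) ⊗ₜ u := by
    rw [hK.inner, h_uv, hK.apply_ui_u, mul_zero, add_zero, tmul_mul_tmul, mul_one]
  rw [c, hK.inner, h_uvui, hK.apply_vi_u, ← TensorProduct.neg_tmul, tmul_mul_tmul,
    tmul_mul_tmul, mul_one, one_mul, TensorProduct.neg_tmul, sub_eq_add_neg]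

end KontsevichBracket

theorem casimir_flow_nontrivial
    (db : A →ₗ[ℂ] A →ₗ[ℂ] A ⊗[ℂ] A) (hK : KontsevichBracket db) :
    LinearMap.mul' ℂ A (db c u) = u * v * ui * vi * u - u * u * v * ui * vi ∧
    LinearMap.mul' ℂ A (db c u) ≠ 0 := by
  have hbracket : LinearMap.mul' ℂ A (db c u) = c * u - u * c := by
    rw [hK.apply_c_u, map_sub, LinearMap.mul'_apply, LinearMap.mul'_apply]
  refine ⟨?_, ?_⟩
  · rw [hbracket, c]
    simp only [mul_assoc]
  · rw [hbracket]
    exact sub_ne_zero.mpr c_mul_u_ne_u_mul_c
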